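/- arXiv:1904.00582 — 2 statements merged into one kernel-verified Lean document; each statement's English description precedes it below -/
import Mathlib

section
/- For any finite family of distinct real numbers X_1, ..., X_N, the triple sum over triples of pairwise distinct indices (i,j,k) of 1/((X_i − X_j)^2 (X_i − X_k)^3) vanishes. -/
open scoped BigOperators

private lemma key6 (a b c : ℝ) (hab : a ≠ b) (hac : a ≠ c) (hbc : b ≠ c) :
    ((a-b)^2*(a-c)^3)⁻¹ + ((a-c)^2*(a-b)^3)⁻¹ + ((b-a)^2*(b-c)^3)⁻¹
      + ((b-c)^2*(b-a)^3)⁻¹ + ((c-a)^2*(c-b)^3)⁻¹ + ((c-b)^2*(c-a)^3)⁻¹ = 0 := by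
  have h1 : a - b ≠ 0 := sub_ne_zero.mpr hab
  have h2 : a - c ≠ 0 := sub_ne_zero.mpr hac
  have h3 : b - c ≠ 0 := sub_ne_zero.mpr hbc
  have h4 : b - a ≠ 0 := sub_ne_zero.mpr hab.symm
  have h5 : c - a ≠ 0 := sub_ne_zero.mpr hac.symm
  have h6 : c - b ≠ 0 := sub_ne_zero.mpr hbc.symm
  field_simp
  ring

set_option maxHeartbeats 1000000 in
/-- For distinct reals `X_1, ..., X_N`, the sum over triples of pairwise distinct
indices `(i,j,k)` of `1/((X_i − X_j)^2 (X_i − X_k)^3)` vanishes. -/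
theorem sum_triple_distinct_vanishes (N : ℕ) (X : Fin N → ℝ)
    (hX : ∀ i j : Fin N, i ≠ j → X i ≠ X j) :
    ∑ i : Fin N, ∑ j ∈ Finset.univ.filter (fun j => j ≠ i),
      ∑ k ∈ Finset.univ.filter (fun k => k ≠ i ∧ k ≠ j),
        ((X i - X j) ^ 2 * (X i - X k) ^ 3)⁻¹ = 0 := by
  classical
  set g : Fin N → Fin N → Fin N → ℝ :=
    fun i j k => ((X i - X j) ^ 2 * (X i - X k) ^ 3)⁻¹ with hg
  set T : Finset (Fin N × Fin N × Fin N) :=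
    Finset.univ.filter
      (fun p => p.2.1 ≠ p.1 ∧ p.2.2 ≠ p.1 ∧ p.2.2 ≠ p.2.1) with hT
  have hmem : ∀ p : Fin N × Fin N × Fin N,
      p ∈ T ↔ (p.2.1 ≠ p.1 ∧ p.2.2 ≠ p.1 ∧ p.2.2 ≠ p.2.1) := by
    intro p; simp [hT]
  have hstep : ∑ i : Fin N, ∑ j ∈ Finset.univ.filter (fun j => j ≠ i),
      ∑ k ∈ Finset.univ.filter (fun k => k ≠ i ∧ k ≠ j),
        ((X i - X j) ^ 2 * (X i - X k) ^ 3)⁻¹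
      = ∑ p ∈ T, g p.1 p.2.1 p.2.2 := by
    rw [hT, Finset.sum_filter, Fintype.sum_prod_type]
    refine Finset.sum_congr rfl fun i _ => ?_
    rw [Fintype.sum_prod_type, Finset.sum_filter]
    refine Finset.sum_congr rfl fun j _ => ?_
    rw [Finset.sum_filter]
    by_cases hji : j ≠ i
    · rw [if_pos hji]
      refine Finset.sum_congr rfl fun k _ => ?_
      by_cases h1 : k ≠ i <;> by_cases h2 : k ≠ j <;>
        simp [hji, h1, h2, hg, mul_inv, mul_comm]
    · simp [hji]
  rw [hstep]
  have perm : ∀ (e : Fin N × Fin N × Fin N ≃ Fin N × Fin N × Fin N),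
      (∀ p, p ∈ T ↔ e p ∈ T) →
      ∑ p ∈ T, g (e p).1 (e p).2.1 (e p).2.2 = ∑ p ∈ T, g p.1 p.2.1 p.2.2 :=
    fun e he => Finset.sum_equiv e he (fun p _ => rfl)
  have S23 : ∑ p ∈ T, g p.1 p.2.2 p.2.1 = ∑ p ∈ T, g p.1 p.2.1 p.2.2 :=
    perm ⟨fun p => (p.1, p.2.2, p.2.1), fun p => (p.1, p.2.2, p.2.1),
      fun p => rfl, fun p => rfl⟩
      (fun p => by simp only [hmem, Equiv.coe_fn_mk]; tauto)
  have S12 : ∑ p ∈ T, g p.2.1 p.1 p.2.2 = ∑ p ∈ T, g p.1 p.2.1 p.2.2 :=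
    perm ⟨fun p => (p.2.1, p.1, p.2.2), fun p => (p.2.1, p.1, p.2.2),
      fun p => rfl, fun p => rfl⟩
      (fun p => by simp only [hmem, Equiv.coe_fn_mk]; tauto)
  have S13 : ∑ p ∈ T, g p.2.2 p.2.1 p.1 = ∑ p ∈ T, g p.1 p.2.1 p.2.2 :=
    perm ⟨fun p => (p.2.2, p.2.1, p.1), fun p => (p.2.2, p.2.1, p.1),
      fun p => rfl, fun p => rfl⟩
      (fun p => by simp only [hmem, Equiv.coe_fn_mk]; tauto)
  have C1 : ∑ p ∈ T, g p.2.1 p.2.2 p.1 = ∑ p ∈ T, g p.1 p.2.1 p.2.2 :=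
    perm ⟨fun p => (p.2.1, p.2.2, p.1), fun p => (p.2.2, p.1, p.2.1),
      fun p => rfl, fun p => rfl⟩
      (fun p => by simp only [hmem, Equiv.coe_fn_mk]; tauto)
  have C2 : ∑ p ∈ T, g p.2.2 p.1 p.2.1 = ∑ p ∈ T, g p.1 p.2.1 p.2.2 :=
    perm ⟨fun p => (p.2.2, p.1, p.2.1), fun p => (p.2.1, p.2.2, p.1),
      fun p => rfl, fun p => rfl⟩
      (fun p => by simp only [hmem, Equiv.coe_fn_mk]; tauto)
  have hsum : ∑ p ∈ T, (g p.1 p.2.1 p.2.2 + g p.1 p.2.2 p.2.1 + g p.2.1 p.1 p.2.2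
      + g p.2.1 p.2.2 p.1 + g p.2.2 p.1 p.2.1 + g p.2.2 p.2.1 p.1) = 0 := by
    refine Finset.sum_eq_zero fun p hp => ?_
    obtain ⟨h1, h2, h3⟩ := (hmem p).mp hp
    exact key6 (X p.1) (X p.2.1) (X p.2.2)
      (hX _ _ (Ne.symm h1)) (hX _ _ (Ne.symm h2)) (hX _ _ (Ne.symm h3))
  simp only [Finset.sum_add_distrib] at hsum
  rw [S23, S12, S13, C1, C2] at hsum
  linarith [hsum]
end

section
/- For the rational Calogero–Moser hierarchy Hamiltonians H_2(X,P) = sum_i P_i^2/2 − sum_{i≠j} 2/(X_i−X_j)^2 and H_3(X,P) = sum_i P_i^3/3 − sum_{i≠j} 4 P_i/(X_i−X_j)^2, the canonical Poisson bracket {H_2, H_3} vanishes on the set of configurations with pairwise distinct positions. -/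
open scoped BigOperators

/-- Canonical Poisson bracket on phase space `(X, P) ∈ ℝ^N × ℝ^N`:
`{f,g} = ∑ k (∂f/∂X_k ∂g/∂P_k − ∂g/∂X_k ∂f/∂P_k)`. -/
noncomputable def canonPB {N : ℕ}
    (f g : ((Fin N → ℝ) × (Fin N → ℝ)) → ℝ)
    (z : (Fin N → ℝ) × (Fin N → ℝ)) : ℝ :=
  ∑ k : Fin N,
    (fderiv ℝ f z (Pi.single k 1, 0) * fderiv ℝ g z (0, Pi.single k 1)
      - fderiv ℝ g z (Pi.single k 1, 0) * fderiv ℝ f z (0, Pi.single k 1))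

/-- `H₂(X,P) = ∑ᵢ Pᵢ²/2 − ∑_{i≠j} 2/(Xᵢ−Xⱼ)²`. -/
noncomputable def cmH2 {N : ℕ} (z : (Fin N → ℝ) × (Fin N → ℝ)) : ℝ :=
  ∑ i : Fin N, (z.2 i) ^ 2 / 2
    - ∑ i : Fin N, ∑ j ∈ Finset.univ.filter (fun j => j ≠ i),
        2 / (z.1 i - z.1 j) ^ 2

/-- `H₃(X,P) = ∑ᵢ Pᵢ³/3 − ∑_{i≠j} 4 Pᵢ/(Xᵢ−Xⱼ)²`. -/
noncomputable def cmH3 {N : ℕ} (z : (Fin N → ℝ) × (Fin N → ℝ)) : ℝ :=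
  ∑ i : Fin N, (z.2 i) ^ 3 / 3
    - ∑ i : Fin N, ∑ j ∈ Finset.univ.filter (fun j => j ≠ i),
        4 * z.2 i / (z.1 i - z.1 j) ^ 2

/-!
Both Hamiltonians have the form `∑ a(Pᵢ) − ∑_{i≠j} b(Pᵢ) V(Xᵢ − Xⱼ)` with `V(d) = d⁻²`, so their
partial derivatives come from one computation. With `u_kj = (X_k − X_j)⁻¹` the bracket becomes
`−8 ∑_{j≠k} P_k P_j u_kj³ − 32 ∑_k ∑_{j,l≠k} u_kj³ u_kl²`. The first sum, and the diagonal part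
`l = j` of the second, vanish because `u_kj = −u_jk` makes their summands antisymmetric in `(k, j)`.
What remains is a sum over pairwise distinct triples, which vanishes because the symmetrization of
`u_kj³ u_kl²` over the six orderings of `(k, j, l)` is identically zero.
-/

open Finset

section DistinctSums

variable {ι M : Type*} [Fintype ι] [DecidableEq ι] [AddCommGroup M]

theorem sum_sum_ne_eq_zero_of_antisymm [IsAddTorsionFree M] (f : ι → ι → M)
    (hf : ∀ i j, i ≠ j → f j i = -f i j) :
    ∑ i, ∑ j ∈ univ.filter (· ≠ i), f i j = 0 := by
  rw [← self_eq_neg]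
  calc (∑ i, ∑ j ∈ univ.filter (· ≠ i), f i j)
      = ∑ j, ∑ i ∈ univ.filter (· ≠ j), f i j := sum_comm' fun i j => by simp [ne_comm]
    _ = -∑ j, ∑ i ∈ univ.filter (· ≠ j), f j i := by
        simp only [← sum_neg_distrib]
        exact sum_congr rfl fun j _ => sum_congr rfl fun i hi => hf j i (mem_filter.1 hi).2.symm

def tripleSum (h : ι → ι → ι → M) : M :=
  ∑ a, ∑ b, ∑ c, if a ≠ b ∧ a ≠ c ∧ b ≠ c then h a b c else 0

theorem tripleSum_add (h h' : ι → ι → ι → M) :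
    tripleSum (fun a b c => h a b c + h' a b c) = tripleSum h + tripleSum h' := by
  simp only [tripleSum, ite_add_zero, sum_add_distrib]

theorem tripleSum_swap12 (h : ι → ι → ι → M) :
    tripleSum h = tripleSum fun a b c => h b a c := by
  unfold tripleSum
  rw [sum_comm]
  refine sum_congr rfl fun a _ => sum_congr rfl fun b _ => sum_congr rfl fun c _ => ?_
  exact if_congr (by tauto) rfl rfl

theorem tripleSum_swap23 (h : ι → ι → ι → M) :
    tripleSum h = tripleSum fun a b c => h a c b := by
  unfold tripleSum
  refine sum_congr rfl fun a _ => ?_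
  rw [sum_comm]
  refine sum_congr rfl fun b _ => sum_congr rfl fun c _ => ?_
  exact if_congr (by tauto) rfl rfl

theorem tripleSum_eq_sum_filter (h : ι → ι → ι → M) :
    tripleSum h = ∑ a, ∑ b ∈ univ.filter (· ≠ a),
      ∑ c ∈ univ.filter (fun c => c ≠ a ∧ c ≠ b), h a b c := by
  simp only [tripleSum, sum_filter]
  refine sum_congr rfl fun a _ => sum_congr rfl fun b _ => ?_
  split_ifs with hab
  · exact sum_congr rfl fun c _ => if_congr (by tauto) rfl rfl
  · exact sum_eq_zero fun c _ => if_neg (by tauto)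

theorem sum_ne_sum_ne_eq_add_tripleSum (h : ι → ι → ι → M) :
    ∑ a, ∑ b ∈ univ.filter (· ≠ a), ∑ c ∈ univ.filter (· ≠ a), h a b c
      = ∑ a, ∑ b ∈ univ.filter (· ≠ a), h a b b + tripleSum h := by
  rw [tripleSum_eq_sum_filter, ← sum_add_distrib]
  refine sum_congr rfl fun a _ => ?_
  rw [← sum_add_distrib]
  refine sum_congr rfl fun b hb => ?_
  rw [← add_sum_erase _ _ hb]
  congr 2
  ext c
  simp only [mem_erase, mem_filter, mem_univ, true_and]
  tauto

theorem tripleSum_eq_zero_of_symmetrization [IsAddTorsionFree M] (g : ι → ι → ι → M)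
    (hg : ∀ a b c, a ≠ b → a ≠ c → b ≠ c →
      g a b c + g a c b + g b a c + g b c a + g c a b + g c b a = 0) :
    tripleSum g = 0 := by
  have e1 : tripleSum (fun a b c => g a c b) = tripleSum g := (tripleSum_swap23 g).symm
  have e2 : tripleSum (fun a b c => g b a c) = tripleSum g := (tripleSum_swap12 g).symm
  have e3 : tripleSum (fun a b c => g b c a) = tripleSum g := (tripleSum_swap12 _).trans e1
  have e4 : tripleSum (fun a b c => g c a b) = tripleSum g := (tripleSum_swap23 _).trans e2
  have e5 : tripleSum (fun a b c => g c b a) = tripleSum g := (tripleSum_swap12 _).trans e4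
  have hsym : tripleSum (fun a b c =>
      g a b c + g a c b + g b a c + g b c a + g c a b + g c b a) = 0 :=
    sum_eq_zero fun a _ => sum_eq_zero fun b _ => sum_eq_zero fun c _ =>
      ite_eq_right_iff.2 fun h => hg a b c h.1 h.2.1 h.2.2
  simp only [tripleSum_add, e1, e2, e3, e4, e5] at hsym
  have : (6 : ℕ) • tripleSum g = 0 := by rw [← hsym]; abel
  simpa using this

end DistinctSums

section PairHamiltonian

variable {ι : Type*} [Fintype ι] [DecidableEq ι]

noncomputable def pairHamiltonian (a b V : ℝ → ℝ) (z : (ι → ℝ) × (ι → ℝ)) : ℝ :=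
  ∑ i, a (z.2 i) - ∑ i, ∑ j ∈ univ.filter (· ≠ i), b (z.2 i) * V (z.1 i - z.1 j)

noncomputable def position (i : ι) : ((ι → ℝ) × (ι → ℝ)) →L[ℝ] ℝ :=
  (ContinuousLinearMap.proj i).comp (ContinuousLinearMap.fst ℝ _ _)

noncomputable def momentum (i : ι) : ((ι → ℝ) × (ι → ℝ)) →L[ℝ] ℝ :=
  (ContinuousLinearMap.proj i).comp (ContinuousLinearMap.snd ℝ _ _)

theorem sum_sum_ne_mul_sub_delta {R : Type*} [CommRing R] (c : ι → ι → R) (k : ι) :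
    ∑ i, ∑ j ∈ univ.filter (· ≠ i), c i j * ((if i = k then 1 else 0) - if j = k then 1 else 0)
      = ∑ j ∈ univ.filter (· ≠ k), (c k j - c j k) := by
  simp only [mul_sub, mul_ite, mul_one, mul_zero, sum_sub_distrib, sum_ite_irrel, sum_const_zero]
  simp [sum_ite_eq', sum_filter, ne_comm]

variable {a a' b b' V V' : ℝ → ℝ} {z : (ι → ℝ) × (ι → ℝ)}
  (ha : ∀ i, HasDerivAt a (a' (z.2 i)) (z.2 i))
  (hb : ∀ i, HasDerivAt b (b' (z.2 i)) (z.2 i))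
  (hV : ∀ i j, i ≠ j → HasDerivAt V (V' (z.1 i - z.1 j)) (z.1 i - z.1 j))
include ha hb hV

theorem hasFDerivAt_pairHamiltonian :
    HasFDerivAt (pairHamiltonian a b V)
      (∑ i, a' (z.2 i) • momentum i - ∑ i, ∑ j ∈ univ.filter (· ≠ i),
        (b (z.2 i) • V' (z.1 i - z.1 j) • (position i - position j)
          + V (z.1 i - z.1 j) • b' (z.2 i) • momentum i)) z := by
  refine (HasFDerivAt.fun_sum fun i _ => ?_).sub
    (HasFDerivAt.fun_sum fun i _ => HasFDerivAt.fun_sum fun j hj => ?_)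
  · exact (ha i).comp_hasFDerivAt z (momentum i).hasFDerivAt
  · exact ((hb i).comp_hasFDerivAt z (momentum i).hasFDerivAt).mul
      ((hV i j (mem_filter.1 hj).2.symm).comp_hasFDerivAt z
        ((position i).hasFDerivAt.sub (position j).hasFDerivAt))

theorem fderiv_pairHamiltonian_momentum (k : ι) :
    fderiv ℝ (pairHamiltonian a b V) z (0, Pi.single k 1)
      = a' (z.2 k) - ∑ j ∈ univ.filter (· ≠ k), V (z.1 k - z.1 j) * b' (z.2 k) := by
  rw [(hasFDerivAt_pairHamiltonian ha hb hV).fderiv]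
  simp [position, momentum, Pi.single_apply]

theorem fderiv_pairHamiltonian_position (k : ι) :
    fderiv ℝ (pairHamiltonian a b V) z (Pi.single k 1, 0)
      = ∑ j ∈ univ.filter (· ≠ k),
          (b (z.2 j) * V' (z.1 j - z.1 k) - b (z.2 k) * V' (z.1 k - z.1 j)) := by
  rw [(hasFDerivAt_pairHamiltonian ha hb hV).fderiv]
  simp [position, momentum, Pi.single_apply, ← mul_assoc, sum_sum_ne_mul_sub_delta]

end PairHamiltonian

theorem inv_sub_eq_neg_inv_sub (x y : ℝ) : (y - x)⁻¹ = -(x - y)⁻¹ := by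
  rw [← inv_neg, neg_sub]

theorem hasDerivAt_inv_sq {d : ℝ} (hd : d ≠ 0) :
    HasDerivAt (fun d : ℝ => d⁻¹ ^ 2) (-2 * d⁻¹ ^ 3) d :=
  ((hasDerivAt_pow 2 d⁻¹).comp d (hasDerivAt_inv hd)).congr_deriv (by simp; field_simp)

theorem inv_sub_pow_three_mul_inv_sub_sq_symmetrization {a b c : ℝ}
    (hab : a ≠ b) (hac : a ≠ c) (hbc : b ≠ c) :
    (a - b)⁻¹ ^ 3 * (a - c)⁻¹ ^ 2 + (a - c)⁻¹ ^ 3 * (a - b)⁻¹ ^ 2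
      + (b - a)⁻¹ ^ 3 * (b - c)⁻¹ ^ 2 + (b - c)⁻¹ ^ 3 * (b - a)⁻¹ ^ 2
      + (c - a)⁻¹ ^ 3 * (c - b)⁻¹ ^ 2 + (c - b)⁻¹ ^ 3 * (c - a)⁻¹ ^ 2 = 0 := by
  have := sub_ne_zero.2 hab
  have := sub_ne_zero.2 hac
  have := sub_ne_zero.2 hbc
  have := sub_ne_zero.2 hab.symm
  have := sub_ne_zero.2 hac.symm
  have := sub_ne_zero.2 hbc.symm
  field_simp
  ring

section CalogeroMoser

variable {N : ℕ}

theorem cmH2_eq_pairHamiltonian :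
    (cmH2 : (Fin N → ℝ) × (Fin N → ℝ) → ℝ)
      = pairHamiltonian (fun p => p ^ 2 / 2) (fun _ => 2) (fun d => d⁻¹ ^ 2) := by
  funext z
  simp only [cmH2, pairHamiltonian, div_eq_mul_inv, inv_pow]

theorem cmH3_eq_pairHamiltonian :
    (cmH3 : (Fin N → ℝ) × (Fin N → ℝ) → ℝ)
      = pairHamiltonian (fun p => p ^ 3 / 3) (fun p => 4 * p) (fun d => d⁻¹ ^ 2) := by
  funext z
  simp only [cmH3, pairHamiltonian, div_eq_mul_inv, inv_pow]

variable {z : (Fin N → ℝ) × (Fin N → ℝ)} (hdist : ∀ i j : Fin N, i ≠ j → z.1 i ≠ z.1 j)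
include hdist

theorem hasDerivAt_inv_sq_sub (i j : Fin N) (hij : i ≠ j) :
    HasDerivAt (fun d : ℝ => d⁻¹ ^ 2) (-2 * (z.1 i - z.1 j)⁻¹ ^ 3) (z.1 i - z.1 j) :=
  hasDerivAt_inv_sq (sub_ne_zero.2 (hdist i j hij))

theorem fderiv_cmH2_momentum (k : Fin N) : fderiv ℝ cmH2 z (0, Pi.single k 1) = z.2 k := by
  rw [cmH2_eq_pairHamiltonian, fderiv_pairHamiltonian_momentum (a' := id) (b' := fun _ => 0)
    (V' := fun d => -2 * d⁻¹ ^ 3)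
    (fun i => by simpa using (hasDerivAt_pow 2 (z.2 i)).div_const 2)
    (fun i => hasDerivAt_const _ _) (hasDerivAt_inv_sq_sub hdist)]
  simp

theorem fderiv_cmH2_position (k : Fin N) :
    fderiv ℝ cmH2 z (Pi.single k 1, 0)
      = 8 * ∑ j ∈ univ.filter (· ≠ k), (z.1 k - z.1 j)⁻¹ ^ 3 := by
  rw [cmH2_eq_pairHamiltonian, fderiv_pairHamiltonian_position (a' := id) (b' := fun _ => 0)
    (V' := fun d => -2 * d⁻¹ ^ 3)
    (fun i => by simpa using (hasDerivAt_pow 2 (z.2 i)).div_const 2)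
    (fun i => hasDerivAt_const _ _) (hasDerivAt_inv_sq_sub hdist), mul_sum]
  refine sum_congr rfl fun j _ => ?_
  rw [inv_sub_eq_neg_inv_sub (z.1 k)]
  ring

theorem fderiv_cmH3_momentum (k : Fin N) :
    fderiv ℝ cmH3 z (0, Pi.single k 1)
      = z.2 k ^ 2 - 4 * ∑ j ∈ univ.filter (· ≠ k), (z.1 k - z.1 j)⁻¹ ^ 2 := by
  rw [cmH3_eq_pairHamiltonian, fderiv_pairHamiltonian_momentum (a' := fun p => p ^ 2)
    (b' := fun _ => 4) (V' := fun d => -2 * d⁻¹ ^ 3)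
    (fun i => by simpa using (hasDerivAt_pow 3 (z.2 i)).div_const 3)
    (fun i => by simpa using (hasDerivAt_id (z.2 i)).const_mul 4)
    (hasDerivAt_inv_sq_sub hdist), mul_sum]
  simp only [mul_comm]

theorem fderiv_cmH3_position (k : Fin N) :
    fderiv ℝ cmH3 z (Pi.single k 1, 0)
      = 8 * ∑ j ∈ univ.filter (· ≠ k), (z.2 j + z.2 k) * (z.1 k - z.1 j)⁻¹ ^ 3 := by
  rw [cmH3_eq_pairHamiltonian, fderiv_pairHamiltonian_position (a' := fun p => p ^ 2)
    (b' := fun _ => 4) (V' := fun d => -2 * d⁻¹ ^ 3)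
    (fun i => by simpa using (hasDerivAt_pow 3 (z.2 i)).div_const 3)
    (fun i => by simpa using (hasDerivAt_id (z.2 i)).const_mul 4)
    (hasDerivAt_inv_sq_sub hdist), mul_sum]
  refine sum_congr rfl fun j _ => ?_
  rw [inv_sub_eq_neg_inv_sub (z.1 k)]
  ring

theorem canonPB_cmH2_cmH3 :
    canonPB cmH2 cmH3 z
      = -8 * ∑ k, ∑ j ∈ univ.filter (· ≠ k), z.2 k * (z.2 j * (z.1 k - z.1 j)⁻¹ ^ 3)
        - 32 * ∑ k, ∑ j ∈ univ.filter (· ≠ k), ∑ l ∈ univ.filter (· ≠ k),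
            (z.1 k - z.1 j)⁻¹ ^ 3 * (z.1 k - z.1 l)⁻¹ ^ 2 := by
  simp only [canonPB, fderiv_cmH2_momentum hdist, fderiv_cmH2_position hdist,
    fderiv_cmH3_momentum hdist, fderiv_cmH3_position hdist]
  conv_rhs => rw [mul_sum, mul_sum, ← sum_sub_distrib]
  refine sum_congr rfl fun k _ => ?_
  rw [← sum_mul_sum]
  simp only [← mul_sum, add_mul, sum_add_distrib]
  ring

end CalogeroMoser

/-- The first two rational Calogero–Moser Hamiltonians are in involution:
`{H₂, H₃} = 0` at every phase point with pairwise distinct positions. -/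
theorem cm_H2_H3_involution {N : ℕ}
    (z : (Fin N → ℝ) × (Fin N → ℝ))
    (hdist : ∀ i j : Fin N, i ≠ j → z.1 i ≠ z.1 j) :
    canonPB (cmH2 (N := N)) (cmH3 (N := N)) z = 0 := by
  have hmomenta := sum_sum_ne_eq_zero_of_antisymm
    (fun k j => z.2 k * (z.2 j * (z.1 k - z.1 j)⁻¹ ^ 3))
    fun k j _ => by simp only [inv_sub_eq_neg_inv_sub (z.1 k)]; ring
  have hdiagonal := sum_sum_ne_eq_zero_of_antisymm
    (fun k j => (z.1 k - z.1 j)⁻¹ ^ 3 * (z.1 k - z.1 j)⁻¹ ^ 2)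
    fun k j _ => by simp only [inv_sub_eq_neg_inv_sub (z.1 k)]; ring
  have htriples := tripleSum_eq_zero_of_symmetrization
    (fun k j l => (z.1 k - z.1 j)⁻¹ ^ 3 * (z.1 k - z.1 l)⁻¹ ^ 2)
    fun a b c hab hac hbc => inv_sub_pow_three_mul_inv_sub_sq_symmetrization
      (hdist a b hab) (hdist a c hac) (hdist b c hbc)
  rw [canonPB_cmH2_cmH3 hdist, sum_ne_sum_ne_eq_add_tripleSum, hmomenta, hdiagonal, htriples]
  ring
end
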